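/- Let A and B be symmetric n×n PSD matrices with equal kernels, 0 < ε < 1, and suppose A ≈_ε B (i.e., (1-ε)B ⪯ A ⪯ (1+ε)B). Then A⁺ ≈_{ε/(1-ε)} B⁺, where A⁺ denotes the Moore–Penrose pseudoinverse. -/

import Mathlib

open Matrix

/-- `Ap` is the Moore–Penrose pseudoinverse of `A`. -/
def IsMoorePenrose {n : ℕ} (A Ap : Matrix (Fin n) (Fin n) ℝ) : Prop :=
  A * Ap * A = A ∧ Ap * A * Ap = Ap ∧ (A * Ap)ᵀ = A * Ap ∧ (Ap * A)ᵀ = Ap * A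

/-- `A` δ-spectrally approximates `B`: `(1-δ)B ⪯ A ⪯ (1+δ)B`. -/
def SpectralApprox {n : ℕ} (δ : ℝ) (A B : Matrix (Fin n) (Fin n) ℝ) : Prop :=
  (A - (1 - δ) • B).PosSemidef ∧ ((1 + δ) • B - A).PosSemidef

namespace Stmt18Aux

variable {n : ℕ}

lemma herm_tr {M : Matrix (Fin n) (Fin n) ℝ} (h : M.IsHermitian) : Mᵀ = M := by
  rw [← conjTranspose_eq_transpose_of_trivial]; exact h

lemma psd_smul {M : Matrix (Fin n) (Fin n) ℝ} (h : M.PosSemidef) {c : ℝ} (hc : 0 ≤ c) :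
    (c • M).PosSemidef := by
  refine PosSemidef.of_dotProduct_mulVec_nonneg ?_ (fun x => ?_)
  · show (c • M)ᴴ = c • M
    rw [conjTranspose_smul, h.1]
    simp
  · have := h.dotProduct_mulVec_nonneg x
    simp only [smul_mulVec, dotProduct_smul, smul_eq_mul]
    positivity

lemma ext_mulVec {M N : Matrix (Fin n) (Fin n) ℝ} (h : ∀ x, M *ᵥ x = N *ᵥ x) : M = N := by
  ext i j
  simpa using congrFun (h (Pi.single j 1)) i

lemma dp_shift (M : Matrix (Fin n) (Fin n) ℝ) (x y : Fin n → ℝ) :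
    (M *ᵥ x) ⬝ᵥ y = x ⬝ᵥ (Mᵀ *ᵥ y) := by
  rw [dotProduct_comm, dotProduct_mulVec, dotProduct_comm, mulVec_transpose]

lemma cs {B : Matrix (Fin n) (Fin n) ℝ} (hB : B.PosSemidef) (x y : Fin n → ℝ) :
    (x ⬝ᵥ B *ᵥ y) ^ 2 ≤ (x ⬝ᵥ B *ᵥ x) * (y ⬝ᵥ B *ᵥ y) := by
  have hBt : Bᵀ = B := herm_tr hB.1
  set p := x ⬝ᵥ B *ᵥ x with hp
  set q := y ⬝ᵥ B *ᵥ y with hq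
  set r := x ⬝ᵥ B *ᵥ y with hr
  have hsym : y ⬝ᵥ B *ᵥ x = r := by
    rw [hr, dotProduct_comm, dp_shift, hBt]
  have key : ∀ t : ℝ, 0 ≤ p + 2 * t * r + t ^ 2 * q := by
    intro t
    have h0 := hB.dotProduct_mulVec_nonneg (x + t • y)
    simp only [star_trivial, mulVec_add, mulVec_smul, dotProduct_add, add_dotProduct,
      dotProduct_smul, smul_dotProduct, smul_eq_mul] at h0
    rw [hsym] at h0
    calc (0:ℝ) ≤ _ := h0
    _ = p + 2 * t * r + t ^ 2 * q := by ring
  have hq0 : 0 ≤ q := by simpa using hB.dotProduct_mulVec_nonneg y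
  have hp0 : 0 ≤ p := by simpa using hB.dotProduct_mulVec_nonneg x
  rcases eq_or_lt_of_le hq0 with hq' | hq'
  · have hr0 : r = 0 := by
      by_contra hr0
      have h1 := key (-(p + 1) / (2 * r))
      rw [← hq'] at h1
      have h2 : 2 * (-(p + 1) / (2 * r)) * r = -(p + 1) := by field_simp
      rw [h2] at h1
      simp only [mul_zero] at h1
      linarith
    rw [hr0]
    nlinarith
  · have h1 := key (-(r / q))
    have h2 : (p + 2 * (-(r / q)) * r + (-(r / q)) ^ 2 * q) * q = p * q - r ^ 2 := by
      field_simp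
      ring
    nlinarith [mul_nonneg h1 hq'.le]

lemma mp_unique (A X Y : Matrix (Fin n) (Fin n) ℝ)
    (hX : IsMoorePenrose A X) (hY : IsMoorePenrose A Y) : X = Y := by
  obtain ⟨hX1, hX2, hX3, hX4⟩ := hX
  obtain ⟨hY1, hY2, hY3, hY4⟩ := hY
  have hAX : A * X = A * Y := by
    calc A * X = (A * X)ᵀ := hX3.symm
    _ = Xᵀ * Aᵀ := transpose_mul _ _
    _ = Xᵀ * (A * Y * A)ᵀ := by rw [hY1]
    _ = Xᵀ * (Aᵀ * (A * Y)ᵀ) := by rw [transpose_mul (A * Y) A]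
    _ = (Xᵀ * Aᵀ) * (A * Y)ᵀ := by rw [Matrix.mul_assoc]
    _ = (A * X)ᵀ * (A * Y)ᵀ := by rw [← transpose_mul]
    _ = (A * X) * (A * Y) := by rw [hX3, hY3]
    _ = ((A * X) * A) * Y := by rw [← Matrix.mul_assoc]
    _ = A * Y := by rw [hX1]
  have hXA : X * A = Y * A := by
    calc X * A = (X * A)ᵀ := hX4.symm
    _ = Aᵀ * Xᵀ := transpose_mul _ _
    _ = (A * (Y * A))ᵀ * Xᵀ := by rw [← Matrix.mul_assoc, hY1]
    _ = ((Y * A)ᵀ * Aᵀ) * Xᵀ := by rw [transpose_mul A (Y * A)]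
    _ = (Y * A)ᵀ * (Aᵀ * Xᵀ) := by rw [Matrix.mul_assoc]
    _ = (Y * A)ᵀ * (X * A)ᵀ := by rw [← transpose_mul]
    _ = (Y * A) * (X * A) := by rw [hX4, hY4]
    _ = Y * (A * (X * A)) := by rw [Matrix.mul_assoc]
    _ = Y * ((A * X) * A) := by rw [← Matrix.mul_assoc A X A]
    _ = Y * (A * X * A) := rfl
    _ = Y * A := by rw [hX1]
  calc X = X * A * X := hX2.symm
  _ = X * A * Y := by rw [Matrix.mul_assoc, Matrix.mul_assoc, hAX]
  _ = Y * A * Y := by rw [hXA]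
  _ = Y := hY2

lemma mp_transpose {A Ap : Matrix (Fin n) (Fin n) ℝ} (hA : Aᵀ = A)
    (hAp : IsMoorePenrose A Ap) : Apᵀ = Ap := by
  obtain ⟨h1, h2, h3, h4⟩ := hAp
  refine mp_unique A Apᵀ Ap ⟨?_, ?_, ?_, ?_⟩ ⟨h1, h2, h3, h4⟩
  · have e1 := congrArg Matrix.transpose h1
    simp only [transpose_mul, hA] at e1
    rw [← Matrix.mul_assoc] at e1
    exact e1
  · have e2 := congrArg Matrix.transpose h2
    simp only [transpose_mul, hA] at e2
    rw [← Matrix.mul_assoc] at e2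
    exact e2
  · rw [transpose_mul, transpose_transpose]
    calc Ap * Aᵀ = Ap * A := by rw [hA]
    _ = (Ap * A)ᵀ := h4.symm
    _ = Aᵀ * Apᵀ := by rw [transpose_mul]
    _ = A * Apᵀ := by rw [hA]
  · rw [transpose_mul, transpose_transpose]
    calc Aᵀ * Ap = A * Ap := by rw [hA]
    _ = (A * Ap)ᵀ := h3.symm
    _ = Apᵀ * Aᵀ := by rw [transpose_mul]
    _ = Apᵀ * A := by rw [hA]

/-- `Bp * B` acts as the identity on the range of `A` when `ker B ⊆ ker A`. -/
lemma proj_id {A B Bp : Matrix (Fin n) (Fin n) ℝ} (hAt : Aᵀ = A)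
    (hBp : IsMoorePenrose B Bp)
    (hk : ∀ v, B *ᵥ v = 0 → A *ᵥ v = 0) : Bp * B * A = A := by
  have h1 : A * (Bp * B) = A := by
    apply ext_mulVec
    intro x
    have hker : B *ᵥ ((Bp * B) *ᵥ x - x) = 0 := by
      rw [mulVec_sub, mulVec_mulVec, ← Matrix.mul_assoc, hBp.1, sub_self]
    have h3 := hk _ hker
    rw [mulVec_sub] at h3
    rw [← mulVec_mulVec]
    exact sub_eq_zero.mp h3
  calc Bp * B * A = (Bp * B)ᵀ * A := by rw [hBp.2.2.2]
  _ = (Bp * B)ᵀ * Aᵀ := by rw [hAt]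
  _ = (A * (Bp * B))ᵀ := (transpose_mul A (Bp * B)).symm
  _ = Aᵀ := by rw [h1]
  _ = A := hAt

lemma core {A B Ap Bp : Matrix (Fin n) (Fin n) ℝ}
    (hA : A.PosSemidef) (hB : B.PosSemidef)
    (hk : ∀ v, B *ᵥ v = 0 → A *ᵥ v = 0)
    (hAp : IsMoorePenrose A Ap) (hBp : IsMoorePenrose B Bp)
    (c : ℝ) (hc : 0 < c) (h : (A - c • B).PosSemidef) :
    (c⁻¹ • Bp - Ap).PosSemidef := by
  have hAt : Aᵀ = A := herm_tr hA.1
  have hBt : Bᵀ = B := herm_tr hB.1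
  have hApt : Apᵀ = Ap := mp_transpose hAt hAp
  have hBpt : Bpᵀ = Bp := mp_transpose hBt hBp
  -- Ap and Bp are PSD
  have hApPSD : Ap.PosSemidef := by
    have he : Ap = Ap * A * Apᴴ := by
      rw [conjTranspose_eq_transpose_of_trivial, hApt]; exact hAp.2.1.symm
    rw [he]; exact hA.mul_mul_conjTranspose_same Ap
  have hBpPSD : Bp.PosSemidef := by
    have he : Bp = Bp * B * Bpᴴ := by
      rw [conjTranspose_eq_transpose_of_trivial, hBpt]; exact hBp.2.1.symm
    rw [he]; exact hB.mul_mul_conjTranspose_same Bp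
  -- key identity Bp * B * Ap = Ap
  have hApA : Ap * A = A * Ap := by
    calc Ap * A = (Ap * A)ᵀ := hAp.2.2.2.symm
    _ = Aᵀ * Apᵀ := by rw [transpose_mul]
    _ = A * Ap := by rw [hAt, hApt]
  have hApEq : Ap = A * (Ap * Ap) := by
    calc Ap = Ap * A * Ap := hAp.2.1.symm
    _ = (A * Ap) * Ap := by rw [hApA]
    _ = A * (Ap * Ap) := by rw [Matrix.mul_assoc]
  have hkey : Bp * B * Ap = Ap := by
    calc Bp * B * Ap = Bp * B * (A * (Ap * Ap)) := by rw [← hApEq]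
    _ = (Bp * B * A) * (Ap * Ap) := by noncomm_ring
    _ = A * (Ap * Ap) := by rw [proj_id hAt hBp hk]
    _ = Ap := hApEq.symm
  refine PosSemidef.of_dotProduct_mulVec_nonneg ?_ ?_
  · show (c⁻¹ • Bp - Ap)ᴴ = c⁻¹ • Bp - Ap
    rw [conjTranspose_eq_transpose_of_trivial, transpose_sub, transpose_smul, hApt, hBpt]
  · intro x
    rw [star_trivial]
    set w : Fin n → ℝ := Ap *ᵥ x with hw
    set a : ℝ := x ⬝ᵥ Ap *ᵥ x with ha
    set b : ℝ := x ⬝ᵥ Bp *ᵥ x with hb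
    have ha0 : 0 ≤ a := by simpa using hApPSD.dotProduct_mulVec_nonneg x
    have hb0 : 0 ≤ b := by simpa using hBpPSD.dotProduct_mulVec_nonneg x
    -- w ⬝ᵥ A *ᵥ w = a
    have hwAw : w ⬝ᵥ A *ᵥ w = a := by
      rw [hw, mulVec_mulVec, dp_shift, hApt, mulVec_mulVec, ← Matrix.mul_assoc, hAp.2.1, ha]
    -- c * (w ⬝ᵥ B *ᵥ w) ≤ a
    have hwBw : c * (w ⬝ᵥ B *ᵥ w) ≤ a := by
      have h0 := h.dotProduct_mulVec_nonneg w
      rw [star_trivial, sub_mulVec, smul_mulVec, dotProduct_sub, dotProduct_smul,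
        smul_eq_mul, hwAw] at h0
      linarith
    have hwBw0 : 0 ≤ w ⬝ᵥ B *ᵥ w := by simpa using hB.dotProduct_mulVec_nonneg w
    -- a = (Bp *ᵥ x) ⬝ᵥ (B *ᵥ w)
    have haEq : (Bp *ᵥ x) ⬝ᵥ B *ᵥ w = a := by
      rw [hw, mulVec_mulVec, dp_shift, hBpt, mulVec_mulVec, ← Matrix.mul_assoc, hkey, ha]
    -- (Bp *ᵥ x) ⬝ᵥ B *ᵥ (Bp *ᵥ x) = b
    have hbEq : (Bp *ᵥ x) ⬝ᵥ B *ᵥ (Bp *ᵥ x) = b := by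
      rw [dp_shift, hBpt, mulVec_mulVec, mulVec_mulVec, hBp.2.1, hb]
    have hcs := cs hB (Bp *ᵥ x) w
    rw [haEq, hbEq] at hcs
    -- now: a^2 ≤ b * (wBw), c * wBw ≤ a ⟹ a ≤ c⁻¹ * b
    rw [sub_mulVec, smul_mulVec, dotProduct_sub, dotProduct_smul, smul_eq_mul,
      ← hb, ← ha, sub_nonneg]
    rcases eq_or_lt_of_le ha0 with ha' | ha'
    · rw [← ha']
      positivity
    · have hca : c * a ≤ b := by
        nlinarith [mul_le_mul_of_nonneg_left hcs (le_of_lt hc),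
          mul_le_mul_of_nonneg_left hwBw hb0, sq_nonneg a]
      calc a = c⁻¹ * (c * a) := by field_simp
      _ ≤ c⁻¹ * b := mul_le_mul_of_nonneg_left hca (le_of_lt (inv_pos.mpr hc))

end Stmt18Aux

open Stmt18Aux in
/-- if `A` and `B` are PSD with equal kernels, `0 < ε < 1` and
`A ≈_ε B`, then `A⁺ ≈_{ε/(1-ε)} B⁺`. -/
theorem stmt_18 {n : ℕ} (A B Ap Bp : Matrix (Fin n) (Fin n) ℝ)
    (hA : A.PosSemidef) (hB : B.PosSemidef)
    (hker : ∀ v : Fin n → ℝ, A.mulVec v = 0 ↔ B.mulVec v = 0)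
    (hAp : IsMoorePenrose A Ap) (hBp : IsMoorePenrose B Bp)
    (ε : ℝ) (hε : 0 < ε) (hε1 : ε < 1)
    (happrox : SpectralApprox ε A B) :
    SpectralApprox (ε / (1 - ε)) Ap Bp := by
  have h1e : (0:ℝ) < 1 - ε := by linarith
  have h1e' : (0:ℝ) < 1 + ε := by linarith
  have hBpPSD : Bp.PosSemidef := by
    have hBt : Bᵀ = B := herm_tr hB.1
    have hBpt : Bpᵀ = Bp := mp_transpose hBt hBp
    have he : Bp = Bp * B * Bpᴴ := by
      rw [conjTranspose_eq_transpose_of_trivial, hBpt]; exact hBp.2.1.symm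
    rw [he]; exact hB.mul_mul_conjTranspose_same Bp
  constructor
  · -- lower bound: Ap - (1 - ε/(1-ε)) • Bp PSD
    have hpre : (B - (1 + ε)⁻¹ • A).PosSemidef := by
      have h0 := psd_smul happrox.2 (le_of_lt (inv_pos.mpr h1e'))
      have he : (1 + ε)⁻¹ • ((1 + ε) • B - A) = B - (1 + ε)⁻¹ • A := by
        rw [smul_sub, smul_smul, inv_mul_cancel₀ (ne_of_gt h1e'), one_smul]
      rwa [he] at h0
    have h2 := core hB hA (fun v hv => (hker v).mp hv) hBp hAp ((1 + ε)⁻¹)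
      (inv_pos.mpr h1e') hpre
    rw [inv_inv] at h2
    have hco : (0:ℝ) ≤ (1 + ε)⁻¹ - (1 - ε / (1 - ε)) := by
      have : (1 + ε)⁻¹ - (1 - ε / (1 - ε)) = 2 * ε ^ 2 / ((1 + ε) * (1 - ε)) := by
        field_simp
        ring
      rw [this]
      positivity
    have heq : Ap - (1 - ε / (1 - ε)) • Bp
        = (1 + ε)⁻¹ • ((1 + ε) • Ap - Bp) + ((1 + ε)⁻¹ - (1 - ε / (1 - ε))) • Bp := by
      have hne : (1 + ε) ≠ 0 := ne_of_gt h1e'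
      match_scalars <;> (field_simp; try ring)
    rw [heq]
    exact (psd_smul h2 (le_of_lt (inv_pos.mpr h1e'))).add (psd_smul hBpPSD hco)
  · -- upper bound: (1 + ε/(1-ε)) • Bp - Ap PSD
    have h1 := core hA hB (fun v hv => (hker v).mpr hv) hAp hBp (1 - ε) h1e happrox.1
    have he : (1:ℝ) + ε / (1 - ε) = (1 - ε)⁻¹ := by
      field_simp
      ring
    rw [he]
    exact h1
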